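/- arXiv:2112.06025 — 3 statements merged into one kernel-verified Lean document; each statement's English description precedes it below -/
import Mathlib

section
/- Let M be an n×n real matrix such that H_Q(M) := (1/2)(Q M Q⁻¹ + Q⁻ᵀ Mᵀ Qᵀ) = 0 for some nonsingular matrix Q. Then the Frobenius norm of the symmetric part satisfies ‖(M + Mᵀ)/2‖_F ≤ (1/2)‖M − Mᵀ‖_F, and consequently ‖M‖_F ≤ (√2/2)‖M − Mᵀ‖_F. -/
open Matrix

/-- The Frobenius norm of a matrix. -/
noncomputable def frobNorm {n m : ℕ} (A : Matrix (Fin n) (Fin m) ℝ) : ℝ :=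
  Real.sqrt (∑ i, ∑ j, (A i j) ^ 2)

/-- If `H_Q(M) = 0` for some nonsingular `Q`, then the symmetric part of `M` is bounded by half
the Frobenius norm of `M − Mᵀ`, and `‖M‖_F ≤ (√2/2)‖M − Mᵀ‖_F`. -/
theorem symmetrization_zero_norm_bounds {n : ℕ} (M Q : Matrix (Fin n) (Fin n) ℝ)
    (hQ : IsUnit Q.det)
    (h : (1 / 2 : ℝ) • (Q * M * Q⁻¹ + (Q⁻¹)ᵀ * Mᵀ * Qᵀ) = 0) :
    frobNorm ((1 / 2 : ℝ) • (M + Mᵀ)) ≤ (1 / 2) * frobNorm (M - Mᵀ) ∧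
      frobNorm M ≤ (Real.sqrt 2 / 2) * frobNorm (M - Mᵀ) := by
  have h2 : Q * M * Q⁻¹ + (Q⁻¹)ᵀ * Mᵀ * Qᵀ = 0 := by
    have h' := congrArg (fun A => (2 : ℝ) • A) h
    simpa [smul_smul] using h'
  set N := Q * M * Q⁻¹ with hN
  have hT : Nᵀ = (Q⁻¹)ᵀ * Mᵀ * Qᵀ := by
    simp [hN, Matrix.transpose_mul, Matrix.mul_assoc]
  have hskew : Nᵀ = -N := by
    rw [hT]
    exact eq_neg_of_add_eq_zero_right h2
  have hM : M = Q⁻¹ * N * Q := by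
    rw [hN]
    simp [Matrix.mul_assoc, Matrix.nonsing_inv_mul_cancel_left _ _ hQ,
      Matrix.mul_nonsing_inv_cancel_left _ _ hQ,
      Matrix.nonsing_inv_mul _ hQ, Matrix.mul_nonsing_inv _ hQ]
  have hMM : M * M = Q⁻¹ * (N * (N * Q)) := by
    rw [hM]
    simp [Matrix.mul_assoc, Matrix.mul_nonsing_inv_cancel_left _ _ hQ]
  have htr : Matrix.trace (M * M) = Matrix.trace (N * N) := by
    rw [hMM, Matrix.trace_mul_comm]
    congr 1
    simp [Matrix.mul_assoc, Matrix.mul_nonsing_inv _ hQ]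
  have hNN : Matrix.trace (N * N) ≤ 0 := by
    have e1 : N * N = -(Nᵀ * N) := by rw [hskew, neg_mul, neg_neg]
    rw [e1, Matrix.trace_neg]
    have : (0:ℝ) ≤ Matrix.trace (Nᵀ * N) := by
      simp only [Matrix.trace, Matrix.diag, Matrix.mul_apply, Matrix.transpose_apply]
      refine Finset.sum_nonneg fun i _ => Finset.sum_nonneg fun j _ => mul_self_nonneg _
    linarith
  set S : ℝ := ∑ i, ∑ j, M i j * M j i with hS
  have keyS : S ≤ 0 := by
    have e2 : Matrix.trace (M * M) = S := by
      simp [Matrix.trace, Matrix.diag, Matrix.mul_apply, hS]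
    rw [e2] at htr
    rw [htr]; exact hNN
  -- sum expansions
  have hA : ∑ i, ∑ j, (((1:ℝ)/2) • (M + Mᵀ)) i j ^ 2
      = (1/4) * (∑ i, ∑ j, ((M - Mᵀ) i j) ^ 2) + S := by
    rw [hS, Finset.mul_sum, ← Finset.sum_add_distrib]
    refine Finset.sum_congr rfl fun i _ => ?_
    rw [Finset.mul_sum, ← Finset.sum_add_distrib]
    refine Finset.sum_congr rfl fun j _ => ?_
    simp [Matrix.smul_apply, Matrix.add_apply, Matrix.sub_apply, Matrix.transpose_apply,
      smul_eq_mul]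
    ring
  have hswap : ∑ i, ∑ j, (M j i) ^ 2 = ∑ i, ∑ j, (M i j) ^ 2 := Finset.sum_comm
  have hB : ∑ i, ∑ j, ((M - Mᵀ) i j) ^ 2
      = 2 * (∑ i, ∑ j, (M i j) ^ 2) - 2 * S := by
    have e : ∀ i j, ((M - Mᵀ) i j) ^ 2
        = (M i j) ^ 2 + (M j i) ^ 2 - 2 * (M i j * M j i) := fun i j => by
      simp [Matrix.sub_apply, Matrix.transpose_apply]; ring
    calc ∑ i, ∑ j, ((M - Mᵀ) i j) ^ 2
        = ∑ i, ∑ j, ((M i j) ^ 2 + (M j i) ^ 2 - 2 * (M i j * M j i)) := by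
          refine Finset.sum_congr rfl fun i _ => Finset.sum_congr rfl fun j _ => e i j
      _ = (∑ i, ∑ j, (M i j) ^ 2) + (∑ i, ∑ j, (M j i) ^ 2) - 2 * S := by
          rw [hS]
          simp [Finset.sum_add_distrib, Finset.sum_sub_distrib, Finset.mul_sum]
      _ = 2 * (∑ i, ∑ j, (M i j) ^ 2) - 2 * S := by rw [hswap]; ring
  constructor
  · unfold frobNorm
    have h14 : (1:ℝ)/2 * Real.sqrt (∑ i, ∑ j, ((M - Mᵀ) i j) ^ 2)
        = Real.sqrt ((1/4) * ∑ i, ∑ j, ((M - Mᵀ) i j) ^ 2) := by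
      rw [Real.sqrt_mul (by norm_num : (0:ℝ) ≤ 1/4)]
      congr 1
      rw [show (1:ℝ)/4 = (1/2)^2 by norm_num, Real.sqrt_sq (by norm_num : (0:ℝ) ≤ 1/2)]
    rw [h14]
    apply Real.sqrt_le_sqrt
    rw [hA]
    linarith
  · unfold frobNorm
    have h12 : Real.sqrt 2 / 2 * Real.sqrt (∑ i, ∑ j, ((M - Mᵀ) i j) ^ 2)
        = Real.sqrt ((1/2) * ∑ i, ∑ j, ((M - Mᵀ) i j) ^ 2) := by
      rw [Real.sqrt_mul (by norm_num : (0:ℝ) ≤ 1/2)]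
      congr 1
      rw [show (1:ℝ)/2 = 2 / 4 by norm_num, Real.sqrt_div (by norm_num : (0:ℝ) ≤ 2),
        show (4:ℝ) = 2^2 by norm_num, Real.sqrt_sq (by norm_num : (0:ℝ) ≤ 2)]
    rw [h12]
    apply Real.sqrt_le_sqrt
    rw [hB]
    linarith
end

section
/- Let M be an n×n real matrix with H_Q(M) = 0 for some nonsingular Q, and suppose M = U₁ + U₂ where U₁ is symmetric. Then ‖M‖_F ≤ √2 ‖U₂‖_F. -/
open Matrix

lemma trace_tmul {n : ℕ} (A : Matrix (Fin n) (Fin n) ℝ) :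
    Matrix.trace (Aᵀ * A) = ∑ i, ∑ j, (A i j) ^ 2 := by
  simp [Matrix.trace, Matrix.diag, Matrix.mul_apply, sq]
  exact Finset.sum_comm

/-- If `H_Q(M) = 0` for nonsingular `Q` and `M = U₁ + U₂` with `U₁` symmetric, then
`‖M‖_F ≤ √2 ‖U₂‖_F`. -/
theorem symmetrization_zero_decomposition_bound {n : ℕ}
    (M Q U₁ U₂ : Matrix (Fin n) (Fin n) ℝ) (hQ : IsUnit Q.det)
    (h : (1 / 2 : ℝ) • (Q * M * Q⁻¹ + (Q⁻¹)ᵀ * Mᵀ * Qᵀ) = 0)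
    (hU₁ : U₁.IsSymm) (hM : M = U₁ + U₂) :
    frobNorm M ≤ Real.sqrt 2 * frobNorm U₂ := by
  have hQi : Q⁻¹ * Q = 1 := nonsing_inv_mul Q hQ
  set S := Q * M * Q⁻¹ with hS
  have hST : Sᵀ = -S := by
    have h0 : S + Sᵀ = 0 := by
      have := h
      rw [smul_eq_zero] at this
      rcases this with h1 | h1
      · norm_num at h1
      · calc S + Sᵀ = Q * M * Q⁻¹ + (Q⁻¹)ᵀ * Mᵀ * Qᵀ := by
              rw [hS]; simp [Matrix.transpose_mul, Matrix.mul_assoc]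
          _ = 0 := h1
    linear_combination (norm := noncomm_ring) h0
  -- trace of M*M equals trace of S*S
  have htr : Matrix.trace (M * M) = Matrix.trace (S * S) := by
    have : S * S = Q * (M * M) * Q⁻¹ := by
      rw [hS]
      calc Q * M * Q⁻¹ * (Q * M * Q⁻¹) = Q * M * (Q⁻¹ * Q) * M * Q⁻¹ := by
            noncomm_ring
        _ = Q * (M * M) * Q⁻¹ := by rw [hQi]; noncomm_ring
    rw [this, Matrix.trace_mul_cycle, ← Matrix.mul_assoc, hQi, Matrix.one_mul]
  have htrMM : Matrix.trace (M * M) ≤ 0 := by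
    have : S * S = -(Sᵀ * S) := by rw [hST]; noncomm_ring
    rw [htr, this, Matrix.trace_neg, trace_tmul]
    simp only [neg_nonpos]
    positivity
  -- A = M - Mᵀ
  set A := M - Mᵀ with hA
  have hAT : Aᵀ = -A := by rw [hA]; simp
  have hAM : Matrix.trace (Aᵀ * A) = -2 * Matrix.trace (A * M) := by
    have h1 : Matrix.trace (A * Mᵀ) = -Matrix.trace (A * M) := by
      have : Matrix.trace (A * Mᵀ) = Matrix.trace ((A * Mᵀ)ᵀ) := (Matrix.trace_transpose _).symm
      rw [this, Matrix.transpose_mul, Matrix.transpose_transpose, hAT]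
      rw [Matrix.trace_mul_comm]
      simp [Matrix.neg_mul]
    calc Matrix.trace (Aᵀ * A) = -Matrix.trace (A * A) := by
          rw [hAT]; simp [Matrix.neg_mul]
      _ = -Matrix.trace (A * M - A * Mᵀ) := by rw [hA]; ring_nf; rw [Matrix.mul_sub]
      _ = -(Matrix.trace (A * M) - Matrix.trace (A * Mᵀ)) := by rw [Matrix.trace_sub]
      _ = -2 * Matrix.trace (A * M) := by rw [h1]; ring
  have hMtM : Matrix.trace (Mᵀ * M) = Matrix.trace (M * M) + (1/2) * Matrix.trace (Aᵀ * A) := by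
    have : Mᵀ * M = M * M - A * M := by rw [hA]; noncomm_ring
    rw [this, Matrix.trace_sub, hAM]; ring
  -- A = U₂ - U₂ᵀ
  have hA2 : A = U₂ - U₂ᵀ := by
    rw [hA, hM, Matrix.transpose_add, hU₁.eq]
    abel
  -- sum bound
  have hsum2 : (∑ i, ∑ j, (U₂ j i) ^ 2) = ∑ i, ∑ j, (U₂ i j) ^ 2 := Finset.sum_comm
  have hAbound : Matrix.trace (Aᵀ * A) ≤ 4 * ∑ i, ∑ j, (U₂ i j) ^ 2 := by
    rw [trace_tmul, hA2]
    calc (∑ i, ∑ j, ((U₂ - U₂ᵀ) i j) ^ 2)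
        ≤ ∑ i, ∑ j, (2 * (U₂ i j)^2 + 2 * (U₂ j i)^2) := by
          apply Finset.sum_le_sum; intro i _
          apply Finset.sum_le_sum; intro j _
          simp only [Matrix.sub_apply, Matrix.transpose_apply]
          nlinarith [sq_nonneg (U₂ i j + U₂ j i)]
      _ = 4 * ∑ i, ∑ j, (U₂ i j) ^ 2 := by
          simp only [Finset.sum_add_distrib, ← Finset.mul_sum]
          rw [hsum2]; ring
  have key : (∑ i, ∑ j, (M i j) ^ 2) ≤ 2 * ∑ i, ∑ j, (U₂ i j) ^ 2 := by
    have := trace_tmul M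
    nlinarith [htrMM, hMtM, hAbound]
  -- conclude
  rw [frobNorm, frobNorm, ← Real.sqrt_mul (by norm_num : (2:ℝ) ≥ 0) ]
  exact Real.sqrt_le_sqrt key
end

section
/- The centrality measure d(X,S) = ‖X^{1/2} S X^{1/2} − ν I‖_F, where ν = (X • S)/n, is invariant under primal-dual scaling: for any nonsingular Q, setting X̃ = Q X Qᵀ and S̃ = Q⁻ᵀ S Q⁻¹, one has d(X̃, S̃) = d(X, S). -/
open Matrix

/-- The square root of a positive semidefinite matrix (removed from Mathlib; old definition). -/
noncomputable def Matrix.PosSemidef.sqrt {n : Type*} [Fintype n] [DecidableEq n] {𝕜 : Type*}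
    [RCLike 𝕜] [PartialOrder 𝕜] {A : Matrix n n 𝕜} (hA : A.PosSemidef) : Matrix n n 𝕜 :=
  hA.1.eigenvectorUnitary.1 * diagonal ((↑) ∘ (√·) ∘ hA.1.eigenvalues) *
  (star hA.1.eigenvectorUnitary : Matrix n n 𝕜)

lemma Matrix.PosSemidef.sqrt_mul_self {m : ℕ} {A : Matrix (Fin m) (Fin m) ℝ} (hA : A.PosSemidef) :
    hA.sqrt * hA.sqrt = A := by
  have hU := Unitary.coe_star_mul_self hA.1.eigenvectorUnitary
  have hs := hA.1.spectral_theorem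
  conv_rhs => rw [hs]
  rw [Unitary.conjStarAlgAut_apply]
  unfold Matrix.PosSemidef.sqrt
  rw [show ∀ a b c d e f : Matrix (Fin m) (Fin m) ℝ, a * b * c * (d * e * f) = a * b * (c * d) * e * f
    from fun a b c d e f => by simp only [Matrix.mul_assoc], hU, Matrix.mul_one, Matrix.mul_assoc _ (diagonal _) (diagonal _),
    diagonal_mul_diagonal]
  congr 3
  funext i
  simp [Real.mul_self_sqrt (hA.eigenvalues_nonneg i)]

lemma Matrix.PosSemidef.posSemidef_sqrt {m : ℕ} {A : Matrix (Fin m) (Fin m) ℝ} (hA : A.PosSemidef) :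
    hA.sqrt.PosSemidef := by
  unfold Matrix.PosSemidef.sqrt
  have := (PosSemidef.diagonal (R := ℝ) (d := ((↑) ∘ (√·) ∘ hA.1.eigenvalues))
    (fun i => by simp [Real.sqrt_nonneg])).mul_mul_conjTranspose_same (hA.1.eigenvectorUnitary : Matrix (Fin m) (Fin m) ℝ)
  simpa [Matrix.star_eq_conjTranspose, Function.comp_def] using this

lemma frobNorm_sym_eq {n : ℕ} (A : Matrix (Fin n) (Fin n) ℝ) (h : Aᵀ = A) :
    frobNorm A = Real.sqrt (A * A).trace := by
  unfold frobNorm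
  congr 1
  simp only [Matrix.trace, Matrix.diag, Matrix.mul_apply]
  refine Finset.sum_congr rfl fun i _ => Finset.sum_congr rfl fun j _ => ?_
  have hji : A j i = A i j := (congrFun (congrFun h j) i).symm
  rw [hji, pow_two]

lemma trace_conj_sq {n : ℕ} (R B : Matrix (Fin n) (Fin n) ℝ) :
    ((R * B * R) * (R * B * R)).trace = (B * (R * R) * (B * (R * R))).trace := by
  rw [show (R*B*R)*(R*B*R) = R * (B*R*(R*B*R)) from by simp [Matrix.mul_assoc],
    Matrix.trace_mul_comm,
    show B*R*(R*B*R)*R = B*(R*R)*(B*(R*R)) from by simp [Matrix.mul_assoc]]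

lemma trace_conj {n : ℕ} (R B : Matrix (Fin n) (Fin n) ℝ) :
    (R * B * R).trace = (B * (R * R)).trace := by
  rw [Matrix.mul_assoc, Matrix.trace_mul_comm, Matrix.mul_assoc]

/-- The centrality measure `d(X,S) = ‖X^{1/2} S X^{1/2} − ν I‖_F` with `ν = trace(XS)/n` is
invariant under the primal-dual scaling `X̃ = Q X Qᵀ`, `S̃ = Q⁻ᵀ S Q⁻¹`. -/
theorem centrality_measure_scaling_invariant {n : ℕ}
    (X S Q : Matrix (Fin n) (Fin n) ℝ)
    (hX : X.PosDef) (hS : S.PosDef) (hQ : IsUnit Q.det)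
    (hXt : (Q * X * Qᵀ).PosSemidef) (ν : ℝ) (hν : ν = (X * S).trace / n) :
    frobNorm (hXt.sqrt * ((Q⁻¹)ᵀ * S * Q⁻¹) * hXt.sqrt - ν • (1 : Matrix (Fin n) (Fin n) ℝ))
      = frobNorm (hX.posSemidef.sqrt * S * hX.posSemidef.sqrt
          - ν • (1 : Matrix (Fin n) (Fin n) ℝ)) := by
  have hQT : IsUnit (Qᵀ).det := by rwa [Matrix.det_transpose]
  set R := hXt.sqrt with hRdef
  set P := hX.posSemidef.sqrt with hPdef
  have hR : R * R = Q * X * Qᵀ := hXt.sqrt_mul_self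
  have hP : P * P = X := hX.posSemidef.sqrt_mul_self
  have hRt : Rᵀ = R := by
    have := hXt.posSemidef_sqrt.isHermitian
    ext i j; exact congrFun (congrFun this i) j
  have hPt : Pᵀ = P := by
    have := hX.posSemidef.posSemidef_sqrt.isHermitian
    ext i j; exact congrFun (congrFun this i) j
  have hSt : Sᵀ = S := by
    ext i j; exact congrFun (congrFun hS.1 i) j
  set St := (Q⁻¹)ᵀ * S * Q⁻¹ with hStdef
  have hStt : Stᵀ = St := by
    rw [hStdef, Matrix.transpose_mul, Matrix.transpose_mul, hSt, Matrix.transpose_transpose,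
      Matrix.mul_assoc]
  -- symmetry of both inner matrices
  have hsym1 : (R * St * R - ν • (1 : Matrix (Fin n) (Fin n) ℝ))ᵀ
      = R * St * R - ν • 1 := by
    simp [Matrix.transpose_mul, hRt, hStt, Matrix.mul_assoc]
  have hsym2 : (P * S * P - ν • (1 : Matrix (Fin n) (Fin n) ℝ))ᵀ
      = P * S * P - ν • 1 := by
    simp [Matrix.transpose_mul, hPt, hSt, Matrix.mul_assoc]
  rw [frobNorm_sym_eq _ hsym1, frobNorm_sym_eq _ hsym2]
  have expand : ∀ M : Matrix (Fin n) (Fin n) ℝ,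
      ((M - ν • 1) * (M - ν • 1)).trace
        = (M * M).trace - 2 * ν * M.trace + ν ^ 2 * n := by
    intro M
    simp [sub_mul, mul_sub, Matrix.smul_mul, Matrix.mul_smul, smul_smul,
      Matrix.trace_sub, Matrix.trace_smul, Matrix.trace_one, smul_eq_mul]
    ring
  rw [expand, expand]
  have htr : (R * St * R).trace = (P * S * P).trace := by
    rw [trace_conj, trace_conj, hR, hP, hStdef, Matrix.transpose_nonsing_inv]
    rw [show (Qᵀ)⁻¹ * S * Q⁻¹ * (Q * X * Qᵀ) = (Qᵀ)⁻¹ * (S * X * Qᵀ) from by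
      simp [Matrix.mul_assoc, Matrix.nonsing_inv_mul_cancel_left _ _ hQ]]
    rw [Matrix.trace_mul_comm]
    rw [show S * X * Qᵀ * (Qᵀ)⁻¹ = S * X from by
      rw [Matrix.mul_assoc, Matrix.mul_nonsing_inv _ hQT, Matrix.mul_one]]
  have htr2 : ((R * St * R) * (R * St * R)).trace = ((P * S * P) * (P * S * P)).trace := by
    rw [trace_conj_sq, trace_conj_sq, hR, hP, hStdef, Matrix.transpose_nonsing_inv]
    rw [show (Qᵀ)⁻¹ * S * Q⁻¹ * (Q * X * Qᵀ) * ((Qᵀ)⁻¹ * S * Q⁻¹ * (Q * X * Qᵀ))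
        = (Qᵀ)⁻¹ * (S * X * (S * X) * Qᵀ) from by
      simp [Matrix.mul_assoc, Matrix.nonsing_inv_mul_cancel_left _ _ hQ,
        Matrix.mul_nonsing_inv_cancel_left _ _ hQT]]
    rw [Matrix.trace_mul_comm]
    rw [show S * X * (S * X) * Qᵀ * (Qᵀ)⁻¹ = S * X * (S * X) from by
      rw [Matrix.mul_assoc, Matrix.mul_nonsing_inv _ hQT, Matrix.mul_one]]
  rw [htr, htr2]
end
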